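/- The SMT separation criterion is sound: if the formula c₀ ≤ x < c₀ + si₀ ∧ c₁ ≤ x < c₁ + si₁ is unsatisfiable over ℕ, then writes to regions (c₀, si₀) and (c₁, si₁) commute, i.e., for any memory m : ℕ → V and values v₀ v₁, writing v₀ to region (c₀,si₀) and then v₁ to region (c₁,si₁) yields the same memory as writing in the opposite order. -/

import Mathlib

/-- Writing a value to every address in the region [c, c + si). -/
def writeRegion {V : Type*} (m : ℕ → V) (c si : ℕ) (v : V) : ℕ → V :=
  fun x => if c ≤ x ∧ x < c + si then v else m x

/-- Soundness of the SMT separation criterion: if no address lies in both regions,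
then writes to the two regions commute. -/
theorem smt_sep_sound_writes_commute {V : Type*} (c₀ si₀ c₁ si₁ : ℕ)
    (hunsat : ¬ ∃ x : ℕ, (c₀ ≤ x ∧ x < c₀ + si₀) ∧ (c₁ ≤ x ∧ x < c₁ + si₁)) :
    ∀ (m : ℕ → V) (v₀ v₁ : V),
      writeRegion (writeRegion m c₀ si₀ v₀) c₁ si₁ v₁ =
      writeRegion (writeRegion m c₁ si₁ v₁) c₀ si₀ v₀ := by
  intro m v₀ v₁
  funext x
  unfold writeRegion
  split_ifs with h₁ h₀ <;> first | rfl | exact (hunsat ⟨x, h₀, h₁⟩).elim
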